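/- Let Λ_Y denote the integral lattice ℤ^16 equipped with the symmetric bilinear form whose Gram matrix is block diagonal with: three 2×2 blocks [[0,2],[2,0]], one 8×8 block equal to the negative of the Cartan matrix of E8, and two 1×1 blocks (−2); write γ_1, γ_2 for the standard basis vectors of the two (−2) blocks and set Σ_Y := γ_1 − γ_2. If v ∈ Λ_Y satisfies (v,v) = 0 and (v,x) is even for every x ∈ Λ_Y, then (v, Σ_Y) ≡ 0 (mod 4). -/
import Mathlib


open Matrix

/-- A 6×6 matrix made of three 2×2 diagonal blocks `[[0,c],[c,0]]`
(the pairs of indices {0,1}, {2,3}, {4,5}). -/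
def Ublock (c : ℤ) : Matrix (Fin 6) (Fin 6) ℤ :=
  fun i j => if i ≠ j ∧ i.val / 2 = j.val / 2 then c else 0

def eqY : (Fin 6 ⊕ Fin 8) ⊕ Fin 2 ≃ Fin 16 :=
  (Equiv.sumCongr finSumFinEquiv (Equiv.refl (Fin 2))).trans finSumFinEquiv

/-- Gram matrix of `Λ_Y = U(2)^3 ⊕ E8(-1) ⊕ ⟨-2⟩^2` on `ℤ^16`:
coordinates 0–5 carry three blocks `[[0,2],[2,0]]`, coordinates 6–13 carry `-E₈`,
coordinates 14, 15 carry `(-2)` each. -/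
def GramY : Matrix (Fin 16) (Fin 16) ℤ :=
  (Matrix.reindex eqY eqY)
    (Matrix.fromBlocks
      (Matrix.fromBlocks (Ublock 2) 0 0 (-CartanMatrix.E₈)) 0 0
      (Matrix.diagonal fun _ => -2))

def pairY (x y : Fin 16 → ℤ) : ℤ := x ⬝ᵥ (GramY *ᵥ y)

def GramY' : Matrix (Fin 16) (Fin 16) ℤ :=
!![0, 2, 0, 0, 0, 0, 0, 0, 0, 0, 0, 0, 0, 0, 0, 0;
   2, 0, 0, 0, 0, 0, 0, 0, 0, 0, 0, 0, 0, 0, 0, 0;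
   0, 0, 0, 2, 0, 0, 0, 0, 0, 0, 0, 0, 0, 0, 0, 0;
   0, 0, 2, 0, 0, 0, 0, 0, 0, 0, 0, 0, 0, 0, 0, 0;
   0, 0, 0, 0, 0, 2, 0, 0, 0, 0, 0, 0, 0, 0, 0, 0;
   0, 0, 0, 0, 2, 0, 0, 0, 0, 0, 0, 0, 0, 0, 0, 0;
   0, 0, 0, 0, 0, 0, -2, 0, 1, 0, 0, 0, 0, 0, 0, 0;
   0, 0, 0, 0, 0, 0, 0, -2, 0, 1, 0, 0, 0, 0, 0, 0;
   0, 0, 0, 0, 0, 0, 1, 0, -2, 1, 0, 0, 0, 0, 0, 0;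
   0, 0, 0, 0, 0, 0, 0, 1, 1, -2, 1, 0, 0, 0, 0, 0;
   0, 0, 0, 0, 0, 0, 0, 0, 0, 1, -2, 1, 0, 0, 0, 0;
   0, 0, 0, 0, 0, 0, 0, 0, 0, 0, 1, -2, 1, 0, 0, 0;
   0, 0, 0, 0, 0, 0, 0, 0, 0, 0, 0, 1, -2, 1, 0, 0;
   0, 0, 0, 0, 0, 0, 0, 0, 0, 0, 0, 0, 1, -2, 0, 0;
   0, 0, 0, 0, 0, 0, 0, 0, 0, 0, 0, 0, 0, 0, -2, 0;
   0, 0, 0, 0, 0, 0, 0, 0, 0, 0, 0, 0, 0, 0, 0, -2]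

lemma gram_eq : GramY = GramY' := by decide

lemma pair_formula (v x : Fin 16 → ℤ) : pairY v x =
    2*(v 0*x 1 + v 1*x 0 + v 2*x 3 + v 3*x 2 + v 4*x 5 + v 5*x 4)
    - 2*(v 6*x 6 + v 7*x 7 + v 8*x 8 + v 9*x 9 + v 10*x 10 + v 11*x 11
        + v 12*x 12 + v 13*x 13)
    + (v 6*x 8 + v 8*x 6 + v 7*x 9 + v 9*x 7 + v 8*x 9 + v 9*x 8
        + v 9*x 10 + v 10*x 9 + v 10*x 11 + v 11*x 10 + v 11*x 12
        + v 12*x 11 + v 12*x 13 + v 13*x 12)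
    - 2*(v 14*x 14 + v 15*x 15) := by
  rw [pairY, gram_eq]
  simp [GramY', mulVec, dotProduct, Fin.sum_univ_succ]
  ring

/-- `Σ_Y = γ₁ - γ₂`, the difference of the standard basis vectors of the two
`⟨-2⟩` blocks. -/
def SigmaY : Fin 16 → ℤ := Pi.single 14 1 - Pi.single 15 1

/-- If `v` is isotropic and pairs evenly with every lattice vector, then
`(v, Σ_Y) ≡ 0 (mod 4)`. -/
theorem stmt5 (v : Fin 16 → ℤ) (hiso : pairY v v = 0)
    (heven : ∀ x : Fin 16 → ℤ, (2 : ℤ) ∣ pairY v x) :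
    (4 : ℤ) ∣ pairY v SigmaY := by
  have h6 := heven (Pi.single 6 1)
  have h7 := heven (Pi.single 7 1)
  have h8 := heven (Pi.single 8 1)
  have h9 := heven (Pi.single 9 1)
  have h10 := heven (Pi.single 10 1)
  have h11 := heven (Pi.single 11 1)
  have h12 := heven (Pi.single 12 1)
  have h13 := heven (Pi.single 13 1)
  rw [pair_formula] at h6 h7 h8 h9 h10 h11 h12 h13
  simp (config := { decide := true }) only [Pi.single_apply, if_true, if_false,
    add_zero, zero_add, mul_zero, sub_zero, mul_one] at h6 h7 h8 h9 h10 h11 h12 h13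
  have e8 : (2:ℤ) ∣ v 8 := by clear hiso heven h7 h8 h9 h10 h11 h12 h13; omega
  have e9 : (2:ℤ) ∣ v 9 := by clear hiso heven h6 h8 h9 h10 h11 h12 h13 e8; omega
  have e6 : (2:ℤ) ∣ v 6 := by clear hiso heven h6 h7 h9 h10 h11 h12 h13 e8; omega
  have e11 : (2:ℤ) ∣ v 11 := by clear hiso heven h6 h7 h8 h9 h11 h12 h13 e6 e8; omega
  have e13 : (2:ℤ) ∣ v 13 := by clear hiso heven h6 h7 h8 h9 h10 h13 e6 e8 e9; omega
  have e12 : (2:ℤ) ∣ v 12 := by clear hiso heven h6 h7 h8 h9 h10 h11 h12 e6 e8 e9 e11; omega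
  have e10 : (2:ℤ) ∣ v 10 := by clear hiso heven h6 h7 h8 h9 h10 h12 h13 e6 e8 e9 e13; omega
  have e7 : (2:ℤ) ∣ v 7 := by clear hiso heven h6 h7 h8 h10 h11 h12 h13 e6 e9 e11 e12 e13; omega
  clear h6 h7 h8 h9 h10 h11 h12 h13 heven
  obtain ⟨a6, ha6⟩ := e6
  obtain ⟨a7, ha7⟩ := e7
  obtain ⟨a8, ha8⟩ := e8
  obtain ⟨a9, ha9⟩ := e9
  obtain ⟨a10, ha10⟩ := e10
  obtain ⟨a11, ha11⟩ := e11
  obtain ⟨a12, ha12⟩ := e12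
  obtain ⟨a13, ha13⟩ := e13
  rw [pair_formula] at hiso
  rw [ha6, ha7, ha8, ha9, ha10, ha11, ha12, ha13] at hiso
  have key : (2:ℤ) ∣ v 14 + v 15 := by
    have hev : Even (v 14 * v 14 + v 15 * v 15) := by
      set X : ℤ := v 0*v 1 + v 2*v 3 + v 4*v 5
        - 2*(a6*a6+a7*a7+a8*a8+a9*a9+a10*a10+a11*a11+a12*a12+a13*a13)
        + 2*(a6*a8+a7*a9+a8*a9+a9*a10+a10*a11+a11*a12+a12*a13) with hX
      have h2A : 2*(v 14*v 14 + v 15*v 15) = 2*(2*X) := by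
        rw [hX]; linear_combination -hiso
      have hA : v 14*v 14 + v 15*v 15 = 2*X := by
        have := mul_left_cancel₀ (two_ne_zero (α := ℤ)) h2A
        exact this
      exact ⟨X, by linarith⟩
    rw [Int.even_add, Int.even_mul, Int.even_mul, or_self, or_self] at hev
    exact (Int.even_add.mpr hev).two_dvd
  have hS : pairY v SigmaY = -2 * v 14 + 2 * v 15 := by
    rw [show SigmaY = (Pi.single 14 1 - Pi.single 15 1 : Fin 16 → ℤ) from rfl, pair_formula]
    simp (config := { decide := true }) only [Pi.sub_apply, Pi.single_apply,
      if_true, if_false, sub_zero, zero_sub, sub_self, add_zero, zero_add,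
      mul_zero, mul_one, mul_neg]
    ring
  rw [hS]
  clear hiso hS
  omega
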